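/- Let \kappa \geq 2 be an integer, \eta \in \mathbb{C} with Im \eta < 0, \tau \in \mathbb{C} with Im \tau > 0, and set \sigma = \tau - 2\eta\kappa (so Im \sigma > 0). Suppose v \in \Theta_\kappa(\sigma) is odd, i.e. v(-\lambda) = -v(\lambda). Then for every \lambda \in \mathbb{C} the function t \mapsto \exp(-i\pi(\lambda + 2\eta t)^2/(4\eta))\, v(-2\eta t) is (absolutely) integrable on \mathbb{R}, and the function w(\lambda) = 2\eta \int_{\mathbb{R}} \exp(-i\pi(\lambda + 2\eta t)^2/(4\eta))\, v(-2\eta t)\, dt is entire, is odd (w(-\lambda) = -w(\lambda)), and belongs to \Theta_\kappa(\tau). (This is the statement that the qKZB heat operator T_{\kappa,0}(\tau) maps E_{\kappa,0,\eta}(\tau - 2\eta\kappa) to E_{\kappa,0,\eta}(\tau), where E_{\kappa,0,\eta}(\tau) is the space of odd functions in \Theta_\kappa(\tau).) -/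

import Mathlib

open Complex MeasureTheory

/-- `Θ_κ(τ)`: the space of entire functions `f` with
`f(λ + 2r + 2sτ) = exp(-2πiκ(s²τ + sλ)) f(λ)` for all integers `r, s`. -/
noncomputable def ThetaSpace (κ : ℕ) (τ : ℂ) : Submodule ℂ (ℂ → ℂ) where
  carrier := {f | Differentiable ℂ f ∧ ∀ (lam : ℂ) (r s : ℤ),
    f (lam + 2 * (r : ℂ) + 2 * (s : ℂ) * τ) =
      Complex.exp (-(2 * (Real.pi : ℂ) * Complex.I * (κ : ℂ)) *
        ((s : ℂ) ^ 2 * τ + (s : ℂ) * lam)) * f lam}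
  add_mem' := by
    rintro f g ⟨hf, hf'⟩ ⟨hg, hg'⟩
    refine ⟨hf.add hg, fun lam r s => ?_⟩
    simp only [Pi.add_apply, hf' lam r s, hg' lam r s]
    ring
  zero_mem' := ⟨differentiable_const 0, fun lam r s => by simp⟩
  smul_mem' := by
    rintro c f ⟨hf, hf'⟩
    refine ⟨hf.const_smul c, fun lam r s => ?_⟩
    simp only [Pi.smul_apply, smul_eq_mul, hf' lam r s]
    ring


set_option maxHeartbeats 1000000

open Complex MeasureTheory Filter Topology Set intervalIntegral Bornology



noncomputable def Hker (η : ℂ) (v : ℂ → ℂ) (lam u : ℂ) : ℂ :=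
  Complex.exp (-Complex.I * (Real.pi : ℂ) * (lam + 2 * η * u) ^ 2 / (4 * η)) * v (-(2 * η * u))

lemma integrable_exp_lin {ε : ℝ} (hε : 0 < ε) (B : ℝ) :
    Integrable fun x : ℝ => Real.exp (-ε * x ^ 2 + B * x) := by
  have hb : ((-ε : ℝ) : ℂ).re < 0 := by simpa using hε
  have h := (integrable_cexp_quadratic' hb (B : ℂ) 0).norm
  refine h.congr (Filter.Eventually.of_forall fun x => ?_)
  show ‖cexp _‖ = _
  rw [show (((-ε : ℝ) : ℂ) * (x:ℂ)^2 + (B:ℂ)*(x:ℂ) + 0) = ((-ε*x^2 + B*x : ℝ) : ℂ) by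
    push_cast; ring, Complex.norm_exp, Complex.ofReal_re]

lemma integrable_exp_aux {ε : ℝ} (hε : 0 < ε) (B : ℝ) :
    Integrable fun x : ℝ => Real.exp (-ε * x ^ 2 + B * |x|) := by
  refine ((integrable_exp_lin hε B).add (integrable_exp_lin hε (-B))).mono' ?_ ?_
  · exact (Real.continuous_exp.comp (by continuity)).aestronglyMeasurable
  · filter_upwards with x
    rw [Real.norm_eq_abs, abs_of_pos (Real.exp_pos _)]
    simp only [Pi.add_apply]
    rcases abs_cases x with ⟨h1, _⟩ | ⟨h1, _⟩ <;> rw [h1]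
    · exact le_add_of_nonneg_right (Real.exp_pos _).le
    · rw [show B * -x = -B * x by ring]
      exact le_add_of_nonneg_left (Real.exp_pos _).le

example : True := trivial

lemma thetaGen (κ : ℕ) (τ : ℂ) (F : ℂ → ℂ)
    (h1 : ∀ lam : ℂ, F (lam + 2) = F lam)
    (h2 : ∀ lam : ℂ, F (lam + 2 * τ) =
      Complex.exp (-(2 * (Real.pi : ℂ) * Complex.I * (κ : ℂ)) * (τ + lam)) * F lam) :
    ∀ (lam : ℂ) (r s : ℤ), F (lam + 2 * (r : ℂ) + 2 * (s : ℂ) * τ) =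
      Complex.exp (-(2 * (Real.pi : ℂ) * Complex.I * (κ : ℂ)) *
        ((s : ℂ) ^ 2 * τ + (s : ℂ) * lam)) * F lam := by
  set c : ℂ := -(2 * (Real.pi : ℂ) * Complex.I * (κ : ℂ)) with hc
  have hr : ∀ (r : ℤ) (lam : ℂ), F (lam + 2 * (r : ℂ)) = F lam := by
    intro r
    induction r using Int.induction_on with
    | zero => simp
    | succ i ih =>
      intro lam
      push_cast
      rw [show lam + 2 * ((i : ℂ) + 1) = (lam + 2 * (i : ℂ)) + 2 by ring, h1]
      have := ih lam; push_cast at this; exact this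
    | pred i ih =>
      intro lam
      push_cast
      have e1 := h1 (lam + 2 * (-(i:ℂ) - 1))
      rw [show lam + 2 * (-(i:ℂ) - 1) + 2 = lam + 2 * (-(i:ℂ)) by ring] at e1
      have e2 := ih lam; push_cast at e2
      rw [← e1]
      exact e2
  have hs : ∀ (s : ℤ) (lam : ℂ), F (lam + 2 * (s : ℂ) * τ) =
      Complex.exp (c * ((s : ℂ) ^ 2 * τ + (s : ℂ) * lam)) * F lam := by
    intro s
    induction s using Int.induction_on with
    | zero => intro lam; simp
    | succ i ih =>
      intro lam
      push_cast
      rw [show lam + 2 * ((i : ℂ) + 1) * τ = (lam + 2 * (i : ℂ) * τ) + 2 * τ by ring, h2]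
      have := ih lam; push_cast at this
      rw [this, ← mul_assoc, ← Complex.exp_add]
      congr 2
      ring
    | pred i ih =>
      intro lam
      push_cast
      set lam0 := lam + 2 * (-(i:ℂ) - 1) * τ with hlam0
      have e1 := h2 lam0
      rw [show lam0 + 2 * τ = lam + 2 * (-(i:ℂ)) * τ by rw [hlam0]; ring] at e1
      have e2 := ih lam; push_cast at e2
      rw [e2] at e1
      have e3 := congrArg (fun z => Complex.exp (-(c * (τ + lam0))) * z) e1.symm
      rw [← mul_assoc, ← Complex.exp_add, neg_add_cancel, Complex.exp_zero, one_mul] at e3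
      rw [e3, ← mul_assoc, ← Complex.exp_add]
      congr 2
      rw [hlam0]; ring
  intro lam r s
  rw [show lam + 2 * (r:ℂ) + 2 * (s:ℂ) * τ = (lam + 2 * (s:ℂ)*τ) + 2 * (r:ℂ) by ring,
    hr r, hs s]

lemma re_factor (κ : ℕ) (W : ℂ) :
    (-(2 * (Real.pi : ℂ) * Complex.I * (κ : ℂ)) * W).re = 2 * Real.pi * (κ : ℝ) * W.im := by
  simp [Complex.mul_re, Complex.mul_im]

lemma v_growth (κ : ℕ) (σ : ℂ) (hA : 0 < σ.im) (v : ℂ → ℂ) (hc : Continuous v)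
    (hper : ∀ (lam : ℂ) (r s : ℤ), v (lam + 2 * (r : ℂ) + 2 * (s : ℂ) * σ) =
      Complex.exp (-(2 * (Real.pi : ℂ) * Complex.I * (κ : ℂ)) *
        ((s : ℂ) ^ 2 * σ + (s : ℂ) * lam)) * v lam) :
    ∃ C, 0 ≤ C ∧ ∀ z : ℂ, ‖v z‖ ≤
      C * Real.exp (Real.pi * (κ : ℝ) / (2 * σ.im) * z.im ^ 2) := by
  set A := σ.im with hAdef
  have hK : IsCompact (Set.Icc (0:ℝ) 2 ×ℂ Set.Icc (-A) A) :=
    Metric.isCompact_of_isClosed_isBounded (isClosed_Icc.reProdIm isClosed_Icc)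
      ((Metric.isBounded_Icc _ _).reProdIm (Metric.isBounded_Icc _ _))
  obtain ⟨M, hM⟩ := hK.exists_bound_of_continuousOn hc.continuousOn
  refine ⟨max M 0, le_max_right _ _, fun z => ?_⟩
  set s : ℤ := round (z.im / (2 * A)) with hs
  set r : ℤ := ⌊(z.re - 2 * (s : ℝ) * σ.re) / 2⌋ with hr
  set lam : ℂ := z - 2 * (r : ℂ) - 2 * (s : ℂ) * σ with hlam
  have hz : z = lam + 2 * (r : ℂ) + 2 * (s : ℂ) * σ := by rw [hlam]; ring
  have h := hper lam r s
  rw [← hz] at h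
  rw [h, norm_mul, Complex.norm_exp, re_factor]
  -- compute imaginary parts
  have hlam_im : lam.im = z.im - 2 * (s : ℝ) * A := by
    rw [hlam]; simp [Complex.sub_im, Complex.mul_im, hAdef]
  have hW : ((s : ℂ) ^ 2 * σ + (s : ℂ) * lam).im = (s:ℝ)^2 * A + (s:ℝ) * lam.im := by
    have hcast : ((s:ℂ)) = (((s:ℝ)):ℂ) := by norm_cast
    rw [Complex.add_im, Complex.mul_im, Complex.mul_im, hcast, ← Complex.ofReal_pow,
      Complex.ofReal_re, Complex.ofReal_im, Complex.ofReal_re, Complex.ofReal_im]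
    ring
  -- |z.im - 2 s A| ≤ A
  have hsA : |z.im - 2 * (s:ℝ) * A| ≤ A := by
    have h1 : |z.im / (2*A) - (s:ℝ)| ≤ 1/2 := by
      rw [hs]; exact abs_sub_round _
    have h2 : z.im - 2*(s:ℝ)*A = (2*A) * (z.im/(2*A) - (s:ℝ)) := by
      field_simp
    rw [h2, abs_mul, abs_of_pos (by linarith : (0:ℝ) < 2*A)]
    calc (2*A) * |z.im/(2*A) - (s:ℝ)| ≤ (2*A) * (1/2) := by
          exact mul_le_mul_of_nonneg_left h1 (by linarith)
      _ = A := by ring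
  -- lam in the compact set
  have hlam_re : lam.re = (z.re - 2*(s:ℝ)*σ.re) - (r:ℝ) * 2 := by
    rw [hlam]; simp [Complex.sub_re, Complex.mul_re]; ring
  have hlam_mem : lam ∈ Set.Icc (0:ℝ) 2 ×ℂ Set.Icc (-A) A := by
    rw [Complex.mem_reProdIm]
    constructor
    · rw [hlam_re]
      constructor
      · exact Int.sub_floor_div_mul_nonneg _ (by norm_num)
      · exact (Int.sub_floor_div_mul_lt _ (by norm_num)).le
    · rw [hlam_im]
      constructor
      · have := abs_le.mp hsA; linarith [this.1]
      · have := abs_le.mp hsA; linarith [(abs_le.mp hsA).2]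
  have hvlam : ‖v lam‖ ≤ max M 0 := by
    have := hM lam hlam_mem
    exact le_trans this (le_max_left _ _)
  -- exponent bound
  have hexp : 2 * Real.pi * (κ:ℝ) * ((s:ℂ)^2*σ + (s:ℂ)*lam).im ≤
      Real.pi * (κ:ℝ) / (2*A) * z.im^2 := by
    rw [hW, hlam_im]
    rw [div_mul_eq_mul_div, le_div_iff₀ (by linarith : (0:ℝ) < 2*A)]
    have hπ : (0:ℝ) ≤ Real.pi := Real.pi_pos.le
    have hκ : (0:ℝ) ≤ (κ:ℝ) := Nat.cast_nonneg κ
    nlinarith [mul_nonneg (mul_nonneg hπ hκ) (sq_nonneg (z.im - 2*(s:ℝ)*A)), sq_nonneg (z.im - 2*(s:ℝ)*A)]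
  calc Real.exp (2*Real.pi*(κ:ℝ) * ((s:ℂ)^2*σ + (s:ℂ)*lam).im) * ‖v lam‖
      ≤ Real.exp (Real.pi*(κ:ℝ)/(2*A) * z.im^2) * max M 0 := by
        apply mul_le_mul (Real.exp_le_exp.mpr hexp) hvlam (norm_nonneg _) (Real.exp_pos _).le
    _ = max M 0 * Real.exp (Real.pi*(κ:ℝ)/(2*A) * z.im^2) := by ring


lemma Hker_bound (η : ℂ) (hη0 : η ≠ 0) (v : ℂ → ℂ) (Cv av : ℝ) (hav : 0 ≤ av)
    (hvb : ∀ z : ℂ, ‖v z‖ ≤ Cv * Real.exp (av * z.im ^ 2))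
    (Λ S : ℝ) (hS : 0 ≤ S) (hΛ : 0 ≤ Λ) :
    ∃ C B : ℝ, 0 ≤ C ∧ 0 ≤ B ∧ ∀ lam : ℂ, ‖lam‖ ≤ Λ → ∀ x y : ℝ, |y| ≤ S →
      ‖Hker η v lam ((x:ℂ) + (y:ℂ) * Complex.I)‖ ≤
        C * Real.exp ((Real.pi * η.im + 4 * av * η.im ^ 2) * x ^ 2 + B * |x|) := by
  have hCv : 0 ≤ Cv := by
    have := (norm_nonneg (v 0)).trans (hvb 0)
    nlinarith [Real.exp_pos (av * (0:ℂ).im ^ 2)]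
  set c1 : ℝ := ‖-Complex.I*(Real.pi:ℂ)/(4*η)‖ * (Λ + 2*‖η‖*S)^2 with hc1
  set B1 : ℝ := Real.pi * (Λ + 2*‖η‖*S) with hB1
  refine ⟨Cv * Real.exp (c1 + 4*av*η.re^2*S^2), B1 + 8*av* |η.im| * |η.re| *S, by positivity,
    by positivity, fun lam hlam x y hy => ?_⟩
  have hT : -Complex.I*(Real.pi:ℂ)*(lam + 2*η*((x:ℂ) + (y:ℂ)*Complex.I))^2/(4*η)
      = (-Complex.I*(Real.pi:ℂ)/(4*η))*(lam + 2*η*((y:ℂ)*Complex.I))^2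
        + (-Complex.I*(Real.pi:ℂ)*(lam + 2*η*((y:ℂ)*Complex.I)))*(x:ℂ)
        + (-Complex.I*(Real.pi:ℂ)*η)*(x:ℂ)^2 := by
    field_simp
    ring
  have hP : ‖lam + 2*η*((y:ℂ)*Complex.I)‖ ≤ Λ + 2*‖η‖*S := by
    refine (norm_add_le _ _).trans ?_
    have : ‖2*η*((y:ℂ)*Complex.I)‖ = 2*‖η‖* |y| := by
      simp [map_mul, Complex.norm_real, Complex.norm_I, Complex.norm_two]
    rw [this]
    have : 2*‖η‖* |y| ≤ 2*‖η‖*S :=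
      mul_le_mul_of_nonneg_left hy (by positivity)
    linarith
  have e1 : ((-Complex.I*(Real.pi:ℂ)*(lam + 2*η*((y:ℂ)*Complex.I)))*(x:ℂ)).re
      = (-Complex.I*(Real.pi:ℂ)*(lam + 2*η*((y:ℂ)*Complex.I))).re * x := by
    simp [Complex.mul_re]
  have e2 : ((-Complex.I*(Real.pi:ℂ)*η)*(x:ℂ)^2).re = Real.pi*η.im*x^2 := by
    rw [Complex.mul_re,
      (show ((x:ℂ)^2).re = x^2 from by rw [← Complex.ofReal_pow, Complex.ofReal_re]),
      (show ((x:ℂ)^2).im = 0 from by rw [← Complex.ofReal_pow, Complex.ofReal_im])]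
    simp [Complex.mul_re, Complex.mul_im]
  have p1 : ((-Complex.I*(Real.pi:ℂ)/(4*η))*(lam + 2*η*((y:ℂ)*Complex.I))^2).re ≤ c1 := by
    refine (Complex.re_le_norm _).trans ?_
    rw [norm_mul, norm_pow, hc1]
    exact mul_le_mul_of_nonneg_left (pow_le_pow_left₀ (norm_nonneg _) hP 2)
      (norm_nonneg _)
  have p2 : (-Complex.I*(Real.pi:ℂ)*(lam + 2*η*((y:ℂ)*Complex.I))).re * x ≤ B1 * |x| := by
    calc (-Complex.I*(Real.pi:ℂ)*(lam + 2*η*((y:ℂ)*Complex.I))).re * x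
        ≤ |(-Complex.I*(Real.pi:ℂ)*(lam + 2*η*((y:ℂ)*Complex.I))).re * x| := le_abs_self _
      _ = |(-Complex.I*(Real.pi:ℂ)*(lam + 2*η*((y:ℂ)*Complex.I))).re| * |x| := abs_mul _ _
      _ ≤ B1 * |x| := by
          refine mul_le_mul_of_nonneg_right ((Complex.abs_re_le_norm _).trans ?_) (abs_nonneg x)
          rw [norm_mul, hB1]
          have : ‖-Complex.I*(Real.pi:ℂ)‖ = Real.pi := by
            simp [map_mul, Complex.norm_I, Complex.norm_real, abs_of_pos Real.pi_pos]
          rw [this]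
          exact mul_le_mul_of_nonneg_left hP Real.pi_pos.le
  have him : (-(2*η*((x:ℂ) + (y:ℂ)*Complex.I))).im = -(2*(η.im*x + η.re*y)) := by
    simp [Complex.mul_im, Complex.mul_re]
    ring
  have p3 : av * ((-(2*η*((x:ℂ) + (y:ℂ)*Complex.I))).im)^2
      ≤ 4*av*η.im^2*x^2 + (8*av* |η.im| * |η.re| *S)* |x| + 4*av*η.re^2*S^2 := by
    rw [him]
    have h1 : η.im*η.re*(x*y) ≤ |η.im| * |η.re| *(|x| *S) := by
      calc η.im*η.re*(x*y) ≤ |η.im*η.re*(x*y)| := le_abs_self _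
        _ = |η.im| * |η.re| *(|x| * |y|) := by rw [abs_mul, abs_mul, abs_mul]
        _ ≤ |η.im| * |η.re| *(|x| *S) := by
            refine mul_le_mul_of_nonneg_left (mul_le_mul_of_nonneg_left hy (abs_nonneg x))
              (by positivity)
    have h2 : y^2 ≤ S^2 := sq_le_sq' (by linarith [(abs_le.mp hy).1]) (abs_le.mp hy).2
    nlinarith [mul_le_mul_of_nonneg_left h1 hav,
      mul_le_mul_of_nonneg_left h2 (mul_nonneg hav (sq_nonneg η.re))]
  -- assemble
  have hsplit : ‖Hker η v lam ((x:ℂ) + (y:ℂ)*Complex.I)‖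
      = Real.exp ((-Complex.I*(Real.pi:ℂ)*(lam + 2*η*((x:ℂ) + (y:ℂ)*Complex.I))^2/(4*η)).re)
        * ‖v (-(2*η*((x:ℂ) + (y:ℂ)*Complex.I)))‖ := by
    rw [Hker, norm_mul, Complex.norm_exp]
  have hre : ((-Complex.I*(Real.pi:ℂ)/(4*η))*(lam + 2*η*((y:ℂ)*Complex.I))^2
        + (-Complex.I*(Real.pi:ℂ)*(lam + 2*η*((y:ℂ)*Complex.I)))*(x:ℂ)
        + (-Complex.I*(Real.pi:ℂ)*η)*(x:ℂ)^2).re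
      = ((-Complex.I*(Real.pi:ℂ)/(4*η))*(lam + 2*η*((y:ℂ)*Complex.I))^2).re
        + (-Complex.I*(Real.pi:ℂ)*(lam + 2*η*((y:ℂ)*Complex.I))).re * x
        + Real.pi*η.im*x^2 := by
    rw [Complex.add_re, Complex.add_re, e1, e2]
  rw [hsplit, hT, hre]
  set T1 : ℝ := ((-Complex.I*(Real.pi:ℂ)/(4*η))*(lam + 2*η*((y:ℂ)*Complex.I))^2).re with hT1d
  set T2 : ℝ := (-Complex.I*(Real.pi:ℂ)*(lam + 2*η*((y:ℂ)*Complex.I))).re with hT2d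
  set J : ℝ := (-(2*η*((x:ℂ) + (y:ℂ)*Complex.I))).im with hJd
  set V : ℝ := ‖v (-(2*η*((x:ℂ) + (y:ℂ)*Complex.I)))‖ with hVd
  have hv' : V ≤ Cv * Real.exp (av * J^2) := hvb _
  calc Real.exp (T1 + T2 * x + Real.pi*η.im*x^2) * V
      ≤ Real.exp (T1 + T2 * x + Real.pi*η.im*x^2) * (Cv * Real.exp (av * J^2)) :=
        mul_le_mul_of_nonneg_left hv' (Real.exp_pos _).le
    _ = Cv * Real.exp ((T1 + T2 * x + Real.pi*η.im*x^2) + av * J^2) := by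
        rw [Real.exp_add (T1 + T2 * x + Real.pi*η.im*x^2) (av * J^2)]
        ring
    _ ≤ Cv * Real.exp ((c1 + 4*av*η.re^2*S^2)
          + ((Real.pi * η.im + 4*av*η.im^2) * x^2 + (B1 + 8*av* |η.im| * |η.re| *S) * |x|)) := by
        refine mul_le_mul_of_nonneg_left (Real.exp_le_exp.mpr (by linarith)) hCv
    _ = Cv * Real.exp (c1 + 4*av*η.re^2*S^2)
          * Real.exp ((Real.pi * η.im + 4*av*η.im^2) * x^2 + (B1 + 8*av* |η.im| * |η.re| *S) * |x|) := by
        rw [Real.exp_add, ← mul_assoc]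


lemma integral_shift (f : ℂ → ℂ) (hf : Differentiable ℂ f) (c : ℂ) {C B ε : ℝ} (hε : 0 < ε)
    (hbd : ∀ z : ℂ, |z.im| ≤ |c.im| → ‖f z‖ ≤ C * Real.exp (-ε * z.re ^ 2 + B * |z.re|)) :
    ∫ t : ℝ, f (t + c) = ∫ t : ℝ, f t := by
  set d := c.im with hd
  -- integrability on horizontal lines
  have hint : ∀ y : ℝ, |y| ≤ |d| → Integrable (fun x : ℝ => f ((x : ℂ) + (y : ℂ) * I)) := by
    intro y hy
    refine (((integrable_exp_aux hε B).const_mul C).mono' ?_ ?_)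
    · exact (hf.continuous.comp (by continuity)).aestronglyMeasurable
    · filter_upwards with x
      have := hbd ((x:ℂ) + (y:ℂ)*I) (by simpa using hy)
      simpa using this
  have h0 : Integrable fun x : ℝ => f x := by
    have := hint 0 (by simp)
    simpa using this
  have hdInt : Integrable fun x : ℝ => f ((x : ℂ) + (d : ℂ) * I) := hint d le_rfl
  -- reduce to purely imaginary shift
  suffices hkey : ∫ x : ℝ, f ((x : ℂ) + (d : ℂ) * I) = ∫ x : ℝ, f x by
    calc ∫ t : ℝ, f (t + c) = ∫ t : ℝ, f ((↑(t + c.re) : ℂ) + (d : ℂ) * I) := by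
          congr 1; funext t; congr 1; apply Complex.ext <;> simp [hd]
      _ = ∫ x : ℝ, f ((x : ℂ) + (d : ℂ) * I) :=
          integral_add_right_eq_self (fun x : ℝ => f ((x : ℂ) + (d : ℂ) * I)) c.re
      _ = ∫ x : ℝ, f x := hkey
  -- rectangle identity
  have hrect : ∀ R : ℝ, (∫ x in (-R)..R, f x) - (∫ x in (-R)..R, f ((x:ℂ) + (d:ℂ) * I)) =
      I • (∫ y in (0:ℝ)..d, f (((-R : ℝ) : ℂ) + (y:ℂ) * I)) -
      I • (∫ y in (0:ℝ)..d, f (((R : ℝ) : ℂ) + (y:ℂ) * I)) := by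
    intro R
    have h := Complex.integral_boundary_rect_eq_zero_of_differentiableOn f ((-R : ℝ) : ℂ)
      (((R : ℝ) : ℂ) + (d : ℂ) * I) (hf.differentiableOn)
    simp only [Complex.add_re, Complex.add_im, Complex.ofReal_re, Complex.ofReal_im,
      Complex.mul_re, Complex.mul_im, Complex.I_re, Complex.I_im, mul_zero, mul_one,
      zero_mul, sub_zero, zero_sub, add_zero, zero_add, neg_zero, Complex.ofReal_zero] at h
    -- h : (∫ x in -R..R, f (x + 0*I)) - (∫ x in -R..R, f (x + d*I)) + I•(∫ y in 0..d, f (R + y*I))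
    --      - I•(∫ y in 0..d, f (-R + y*I)) = 0
    linear_combination h
  -- limits of the two horizontal integrals
  have hlim1 : Tendsto (fun R : ℝ => (∫ x in (-R)..R, f x) -
      (∫ x in (-R)..R, f ((x:ℂ) + (d:ℂ) * I))) atTop
      (𝓝 ((∫ x : ℝ, f x) - ∫ x : ℝ, f ((x:ℂ) + (d:ℂ) * I))) := by
    refine Tendsto.sub ?_ ?_
    · exact intervalIntegral_tendsto_integral h0 tendsto_neg_atTop_atBot tendsto_id
    · exact intervalIntegral_tendsto_integral hdInt tendsto_neg_atTop_atBot tendsto_id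
  -- side bound
  have hside : ∀ R : ℝ, 0 ≤ R → ∀ x0 : ℝ, |x0| = R →
      ‖∫ y in (0:ℝ)..d, f ((x0 : ℂ) + (y:ℂ) * I)‖ ≤ (C * Real.exp (-ε * R^2 + B * R)) * |d - 0| := by
    intro R hR x0 hx0
    refine intervalIntegral.norm_integral_le_of_norm_le_const ?_
    intro y hy
    have hy' : |y| ≤ |d| := by
      rcases Set.mem_uIoc.mp hy with ⟨h1, h2⟩ | ⟨h1, h2⟩
      · rw [abs_of_pos h1]; exact h2.trans (le_abs_self d)
      · rw [abs_of_nonpos h2]; exact (neg_le_neg h1.le).trans (neg_le_abs d)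
    have := hbd ((x0:ℂ) + (y:ℂ)*I) (by simpa using hy')
    simp only [Complex.add_re, Complex.ofReal_re, Complex.mul_re, Complex.ofReal_im,
      Complex.I_re, Complex.I_im, mul_zero, zero_mul, mul_one, sub_zero, add_zero,
      zero_sub] at this
    calc ‖f ((x0:ℂ) + (y:ℂ)*I)‖ ≤ C * Real.exp (-ε * x0^2 + B * |x0|) := by
          convert this using 4 <;> simp
      _ = C * Real.exp (-ε * R^2 + B * R) := by rw [← hx0, _root_.sq_abs]
  -- sides tend to zero
  have hexp0 : Tendsto (fun R : ℝ => C * Real.exp (-ε * R^2 + B * R) * |d - 0| * 2) atTop (𝓝 0) := by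
    have h1 : Tendsto (fun R : ℝ => -ε * R^2 + B * R) atTop atBot := by
      have h2 : Tendsto (fun R : ℝ => R * (-ε * R + B)) atTop atBot := by
        apply Tendsto.atTop_mul_atBot₀ tendsto_id
        apply tendsto_atBot_add_const_right
        exact Tendsto.const_mul_atTop_of_neg (by linarith) tendsto_id
      refine Tendsto.congr (fun R => by ring) h2
    have h3 := Real.tendsto_exp_atBot.comp h1
    have := (h3.const_mul C).mul_const (|d - 0|) |>.mul_const 2
    simpa using this
  have hlim2 : Tendsto (fun R : ℝ => (∫ x in (-R)..R, f x) -
      (∫ x in (-R)..R, f ((x:ℂ) + (d:ℂ) * I))) atTop (𝓝 0) := by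
    refine squeeze_zero_norm' ?_ hexp0
    filter_upwards [eventually_ge_atTop (0:ℝ)] with R hR
    rw [hrect R]
    calc ‖I • (∫ y in (0:ℝ)..d, f (((-R : ℝ) : ℂ) + (y:ℂ) * I)) -
          I • (∫ y in (0:ℝ)..d, f (((R : ℝ) : ℂ) + (y:ℂ) * I))‖
        ≤ ‖I • (∫ y in (0:ℝ)..d, f (((-R : ℝ) : ℂ) + (y:ℂ) * I))‖ +
          ‖I • (∫ y in (0:ℝ)..d, f (((R : ℝ) : ℂ) + (y:ℂ) * I))‖ := norm_sub_le _ _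
      _ ≤ (C * Real.exp (-ε * R^2 + B * R)) * |d - 0| +
          (C * Real.exp (-ε * R^2 + B * R)) * |d - 0| := by
          rw [norm_smul, norm_smul, Complex.norm_I, one_mul, one_mul]
          exact add_le_add (hside R hR (-R) (by rw [abs_neg, _root_.abs_of_nonneg hR]))
            (hside R hR R (_root_.abs_of_nonneg hR))
      _ = C * Real.exp (-ε * R^2 + B * R) * |d - 0| * 2 := by ring
  have := tendsto_nhds_unique hlim1 hlim2
  exact (sub_eq_zero.mp this).symm
/-- The qKZB heat operator `T_{κ,0}(τ)` maps the space of odd functions in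
`Θ_κ(τ - 2ηκ)` to the space of odd functions in `Θ_κ(τ)`: for odd
`v ∈ Θ_κ(τ-2ηκ)`, the function
`w(λ) = ∫_{2ηℝ} exp(-iπ(λ+μ)²/(4η)) v(-μ) dμ` (contour `μ = 2ηt`, `t ∈ ℝ`)
is well-defined (the integrand is integrable), odd, and lies in `Θ_κ(τ)`. -/
theorem heat_operator_maps_odd_theta (κ : ℕ) (hκ : 2 ≤ κ) (η τ : ℂ)
    (hη : η.im < 0) (hτ : 0 < τ.im) (v : ℂ → ℂ)
    (hv : v ∈ ThetaSpace κ (τ - 2 * η * (κ : ℂ)))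
    (hodd : ∀ lam : ℂ, v (-lam) = -v lam) :
    (∀ lam : ℂ, Integrable (fun t : ℝ =>
      Complex.exp (-Complex.I * (Real.pi : ℂ) * (lam + 2 * η * (t : ℂ)) ^ 2 / (4 * η)) *
        v (-(2 * η * (t : ℂ))))) ∧
    (fun lam : ℂ => 2 * η * ∫ t : ℝ,
        Complex.exp (-Complex.I * (Real.pi : ℂ) * (lam + 2 * η * (t : ℂ)) ^ 2 / (4 * η)) *
          v (-(2 * η * (t : ℂ)))) ∈ ThetaSpace κ τ ∧
    (∀ lam : ℂ,
      (2 * η * ∫ t : ℝ,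
        Complex.exp (-Complex.I * (Real.pi : ℂ) * (-lam + 2 * η * (t : ℂ)) ^ 2 / (4 * η)) *
          v (-(2 * η * (t : ℂ)))) =
      -(2 * η * ∫ t : ℝ,
        Complex.exp (-Complex.I * (Real.pi : ℂ) * (lam + 2 * η * (t : ℂ)) ^ 2 / (4 * η)) *
          v (-(2 * η * (t : ℂ))))) := by
  obtain ⟨hvd, hper⟩ := hv
  set σ : ℂ := τ - 2 * η * (κ : ℂ) with hσ
  have hη0 : η ≠ 0 := by
    intro h; rw [h] at hη; simp at hη
  have hκpos : (0:ℝ) < (κ:ℝ) := by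
    have : (2:ℝ) ≤ (κ:ℝ) := by exact_mod_cast hκ
    linarith
  have hσim : σ.im = τ.im - 2 * (κ:ℝ) * η.im := by
    rw [hσ]
    simp [Complex.sub_im, Complex.mul_im, Complex.mul_re]
    ring
  have hA : 0 < σ.im := by rw [hσim]; nlinarith
  obtain ⟨Cv, hCv0, hvb⟩ := v_growth κ σ hA v hvd.continuous hper
  set av : ℝ := Real.pi * (κ:ℝ) / (2 * σ.im) with havd
  have hav0 : 0 ≤ av := by rw [havd]; positivity
  have ha : Real.pi * η.im + 4 * av * η.im ^ 2 < 0 := by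
    have hAne : σ.im ≠ 0 := ne_of_gt hA
    have hdiv : 4 * av * η.im ^ 2 * σ.im = 2 * Real.pi * (κ:ℝ) * η.im ^ 2 := by
      rw [havd]; field_simp; ring
    have h2 : (Real.pi * η.im + 4 * av * η.im ^ 2) * σ.im = Real.pi * η.im * τ.im := by
      linear_combination hdiv + Real.pi * η.im * hσim
    have hrhs : Real.pi * η.im * τ.im < 0 :=
      mul_neg_of_neg_of_pos (mul_neg_of_pos_of_neg Real.pi_pos hη) hτ
    nlinarith [hA]
  set ε : ℝ := -(Real.pi * η.im + 4 * av * η.im ^ 2) with hεd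
  have hε0 : 0 < ε := by rw [hεd]; linarith
  -- master bound
  have hbound : ∀ (Λ S : ℝ), 0 ≤ S → 0 ≤ Λ → ∃ C B : ℝ, 0 ≤ C ∧ 0 ≤ B ∧
      ∀ lam : ℂ, ‖lam‖ ≤ Λ → ∀ u : ℂ, |u.im| ≤ S →
        ‖Hker η v lam u‖ ≤ C * Real.exp (-ε * u.re ^ 2 + B * |u.re|) := by
    intro Λ S hS hΛ
    obtain ⟨C, B, hC, hB, h⟩ := Hker_bound η hη0 v Cv av hav0 hvb Λ S hS hΛ
    refine ⟨C, B, hC, hB, fun lam hlam u hu => ?_⟩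
    have h2 := h lam hlam u.re u.im hu
    rw [Complex.re_add_im] at h2
    rw [show -ε = Real.pi * η.im + 4 * av * η.im ^ 2 by rw [hεd]; ring]
    exact h2
  -- differentiability in the integration variable
  have hHdiff : ∀ lam : ℂ, Differentiable ℂ (fun u : ℂ => Hker η v lam u) := by
    intro lam
    have h1 : Differentiable ℂ (fun u : ℂ => lam + 2 * η * u) :=
      (differentiable_const _).add ((differentiable_const _).mul differentiable_id)
    have h2 : Differentiable ℂ (fun u : ℂ =>
        -Complex.I * (Real.pi:ℂ) * (lam + 2 * η * u) ^ 2 / (4 * η)) :=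
      (((h1.pow 2).const_mul _).div_const _)
    have h3 : Differentiable ℂ (fun u : ℂ => v (-(2 * η * u))) :=
      hvd.comp (((differentiable_const (2*η)).mul differentiable_id).neg)
    exact h2.cexp.mul h3
  have hconT : ∀ lam : ℂ, Continuous (fun t : ℝ => Hker η v lam ↑t) :=
    fun lam => (hHdiff lam).continuous.comp Complex.continuous_ofReal
  -- integrability
  have hInt : ∀ lam : ℂ, Integrable (fun t : ℝ => Hker η v lam ↑t) := by
    intro lam
    obtain ⟨C, B, hC, hB, h⟩ := hbound (‖lam‖) 0 le_rfl (norm_nonneg _)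
    refine ((integrable_exp_aux hε0 B).const_mul C).mono'
      (hconT lam).aestronglyMeasurable ?_
    filter_upwards with t
    have := h lam le_rfl ↑t (by simp)
    simpa using this
  set F : ℂ → ℂ := fun lam => ∫ t : ℝ, Hker η v lam ↑t with hFd
  have hFdef : ∀ lam : ℂ, F lam = ∫ t : ℝ, Hker η v lam ↑t := fun _ => rfl
  -- contour shifts
  have hshift : ∀ (lam : ℂ) (c : ℂ), (∫ t : ℝ, Hker η v lam (↑t + c)) = F lam := by
    intro lam c
    obtain ⟨C, B, hC, hB, h⟩ := hbound (‖lam‖) |c.im| (abs_nonneg _)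
      (norm_nonneg _)
    rw [hFdef]
    exact integral_shift _ (hHdiff lam) c hε0 (fun z hz => h lam le_rfl z hz)
  -- lattice relations for F
  have hF1 : ∀ lam : ℂ, F (lam + 2) = F lam := by
    intro lam
    rw [hFdef, ← hshift lam (1/η)]
    congr 1; funext t
    have hv2 : v (-(2*η*((t:ℂ) + 1/η))) = v (-(2*η*(t:ℂ))) := by
      rw [show -(2*η*((t:ℂ) + 1/η)) = -(2*η*(t:ℂ)) + 2*(((-1 : ℤ)):ℂ) + 2*(((0:ℤ)):ℂ)*σ by
        push_cast; field_simp; ring]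
      rw [hper]
      norm_num
    simp only [Hker]
    rw [hv2, show lam + 2*η*((t:ℂ) + 1/η) = lam + 2 + 2*η*(t:ℂ) by field_simp; ring]
  have hF2 : ∀ lam : ℂ, F (lam + 2*τ) =
      Complex.exp (-(2 * (Real.pi : ℂ) * Complex.I * (κ : ℂ)) * (τ + lam)) * F lam := by
    intro lam
    rw [hFdef, ← hshift lam (σ/η), ← MeasureTheory.integral_const_mul]
    congr 1; funext t
    simp only [Hker]
    have hv2 : v (-(2*η*((t:ℂ) + σ/η))) =
        Complex.exp (-(2 * (Real.pi : ℂ) * Complex.I * (κ : ℂ)) * (σ + 2*η*(t:ℂ))) *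
          v (-(2*η*(t:ℂ))) := by
      rw [show -(2*η*((t:ℂ) + σ/η)) = -(2*η*(t:ℂ)) + 2*(((0 : ℤ)):ℂ) + 2*(((-1:ℤ)):ℂ)*σ by
        push_cast; field_simp; ring]
      rw [hper]
      congr 2
      push_cast
      ring
    rw [hv2, ← mul_assoc, ← mul_assoc, ← Complex.exp_add, ← Complex.exp_add]
    congr 2
    rw [hσ]
    field_simp
    ring
  -- differentiability of F
  have hder : ∀ (t : ℝ) (lam : ℂ), HasDerivAt (fun z : ℂ => Hker η v z ↑t)
      (-Complex.I*(Real.pi:ℂ)*(2*(lam + 2*η*(t:ℂ)))/(4*η) * Hker η v lam ↑t) lam := by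
    intro t lam
    have h1 : HasDerivAt (fun z : ℂ => (z + 2*η*(t:ℂ))^2) (2*(lam + 2*η*(t:ℂ))) lam := by
      have := ((hasDerivAt_id lam).add_const (2*η*(t:ℂ))).fun_pow 2
      simpa using this
    have h2 : HasDerivAt (fun z : ℂ => -Complex.I*(Real.pi:ℂ)*(z + 2*η*(t:ℂ))^2/(4*η))
        (-Complex.I*(Real.pi:ℂ)*(2*(lam + 2*η*(t:ℂ)))/(4*η)) lam := by
      have := (h1.const_mul (-Complex.I*(Real.pi:ℂ))).div_const (4*η)
      convert this using 1
    have h3 := h2.cexp.mul_const (v (-(2*η*(t:ℂ))))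
    refine h3.congr_deriv ?_
    simp only [Hker]
    ring
  have hFdiff : Differentiable ℂ F := by
    intro lam0
    set Λ : ℝ := ‖lam0‖ + 1 with hΛd
    have hΛ0 : 0 ≤ Λ := by rw [hΛd]; positivity
    obtain ⟨C, B, hC, hB, h⟩ := hbound Λ 0 le_rfl hΛ0
    set D : ℝ := Real.pi * (Λ + 2*‖η‖) / (2*‖η‖) with hDd
    have hD0 : 0 ≤ D := by rw [hDd]; positivity
    have hpref : ∀ (t : ℝ) (lam : ℂ), ‖lam‖ ≤ Λ →
        ‖-Complex.I*(Real.pi:ℂ)*(2*(lam + 2*η*(t:ℂ)))/(4*η)‖ ≤ D * Real.exp |t| := by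
      intro t lam hlam
      have hηpos0 : 0 < ‖η‖ := norm_pos_iff.mpr hη0
      have habs : ‖-Complex.I*(Real.pi:ℂ)*(2*(lam + 2*η*(t:ℂ)))/(4*η)‖
          = Real.pi * ‖lam + 2*η*(t:ℂ)‖ / (2*‖η‖) := by
        rw [norm_div]
        simp [map_mul, Complex.norm_I, Complex.norm_real, Complex.norm_two,
          abs_of_pos Real.pi_pos, Complex.norm_ofNat]
        field_simp
        ring
      rw [habs]
      have h1 : ‖lam + 2*η*(t:ℂ)‖ ≤ Λ + 2*‖η‖*|t| := by
        refine (norm_add_le _ _).trans ?_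
        have : ‖2*η*(t:ℂ)‖ = 2*‖η‖*|t| := by
          simp [map_mul, Complex.norm_two, Complex.norm_real]
        rw [this]
        exact add_le_add_left hlam _
      have h2 : Λ + 2*‖η‖*|t| ≤ (Λ + 2*‖η‖) * Real.exp |t| := by
        have h3 : (1:ℝ) + |t| ≤ Real.exp |t| := by
          have := Real.add_one_le_exp |t|; linarith
        have habη : 0 ≤ ‖η‖ := norm_nonneg η
        nlinarith [abs_nonneg t]
      have hηpos : 0 < ‖η‖ := norm_pos_iff.mpr hη0
      calc Real.pi * ‖lam + 2*η*(t:ℂ)‖ / (2*‖η‖)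
          ≤ Real.pi * ((Λ + 2*‖η‖) * Real.exp |t|) / (2*‖η‖) := by
            have hnum := mul_le_mul_of_nonneg_left (h1.trans h2) Real.pi_pos.le
            exact (div_le_div_iff_of_pos_right (by positivity)).mpr hnum
        _ = D * Real.exp |t| := by rw [hDd]; field_simp
    have key := hasDerivAt_integral_of_dominated_loc_of_deriv_le (μ := volume) (x₀ := lam0)
      (F := fun (lam : ℂ) (t : ℝ) => Hker η v lam ↑t)
      (F' := fun (lam : ℂ) (t : ℝ) =>
        -Complex.I*(Real.pi:ℂ)*(2*(lam + 2*η*(t:ℂ)))/(4*η) * Hker η v lam ↑t)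
      (bound := fun t : ℝ => (C * D) * Real.exp (-ε*t^2 + (B+1)*|t|))
      (Metric.ball_mem_nhds lam0 one_pos)
      (Filter.Eventually.of_forall fun lam => (hconT lam).aestronglyMeasurable)
      (hInt lam0)
      ?_ ?_
      ((integrable_exp_aux hε0 (B+1)).const_mul (C*D))
      ?_
    · exact key.2.differentiableAt
    · apply Continuous.aestronglyMeasurable
      exact Continuous.mul (by fun_prop) (hconT lam0)
    · filter_upwards with t
      intro lam hlam
      have hlamd := Metric.mem_ball.mp hlam
      rw [Complex.dist_eq] at hlamd
      have h6 := norm_sub_norm_le lam lam0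
      have hlamΛ : ‖lam‖ ≤ Λ := by
        rw [hΛd]
        linarith
      have h7 : ‖Hker η v lam ↑t‖ ≤ C * Real.exp (-ε*t^2 + B*|t|) := by
        have := h lam hlamΛ ↑t (by simp)
        simpa using this
      have h8 := hpref t lam hlamΛ
      calc ‖-Complex.I*(Real.pi:ℂ)*(2*(lam + 2*η*(t:ℂ)))/(4*η) * Hker η v lam ↑t‖
          = ‖-Complex.I*(Real.pi:ℂ)*(2*(lam + 2*η*(t:ℂ)))/(4*η)‖ *
            ‖Hker η v lam ↑t‖ := by rw [norm_mul]
        _ ≤ (D * Real.exp |t|) * (C * Real.exp (-ε*t^2 + B*|t|)) :=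
            mul_le_mul h8 h7 (norm_nonneg _) (by positivity)
        _ = (C*D) * Real.exp (-ε*t^2 + (B+1)*|t|) := by
            rw [show (D * Real.exp |t|) * (C * Real.exp (-ε*t^2 + B*|t|))
              = (C*D) * (Real.exp |t| * Real.exp (-ε*t^2 + B*|t|)) by ring, ← Real.exp_add]
            congr 2
            ring
    · filter_upwards with t
      intro lam hlam
      exact hder t lam
  -- final assembly
  refine ⟨fun lam => hInt lam, ⟨?_, ?_⟩, fun lam => ?_⟩
  · exact hFdiff.const_mul (2*η)
  · intro lam r s
    have hgen := thetaGen κ τ F hF1 hF2 lam r s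
    show 2*η*F (lam + 2*(r:ℂ) + 2*(s:ℂ)*τ) = _ * (2*η*F lam)
    rw [hgen]; ring
  · have h1 : ∀ t : ℝ, Hker η v (-lam) ↑(-t) = -(Hker η v lam ↑t) := by
      intro t
      simp only [Hker]
      push_cast
      have hvneg : v (-(2*η*(-(t:ℂ)))) = -(v (-(2*η*(t:ℂ)))) := by
        have h2 := hodd (-(2*η*(t:ℂ)))
        rw [neg_neg] at h2
        rw [show -(2*η*(-(t:ℂ))) = 2*η*(t:ℂ) by ring]
        exact h2
      rw [hvneg, show (-lam + 2*η*(-(t:ℂ)))^2 = (lam + 2*η*(t:ℂ))^2 by ring]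
      ring
    have hO : (∫ t:ℝ, Hker η v (-lam) ↑t) = -∫ t:ℝ, Hker η v lam ↑t := by
      calc (∫ t:ℝ, Hker η v (-lam) ↑t)
          = ∫ t:ℝ, Hker η v (-lam) ↑(-t) :=
            (integral_neg_eq_self (fun t : ℝ => Hker η v (-lam) ↑t) volume).symm
        _ = ∫ t:ℝ, -(Hker η v lam ↑t) := by congr 1; funext t; exact h1 t
        _ = -∫ t:ℝ, Hker η v lam ↑t := integral_neg _
    show 2*η*(∫ t:ℝ, Hker η v (-lam) ↑t) = -(2*η*∫ t:ℝ, Hker η v lam ↑t)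
    rw [hO]; ring
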